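/- Let (ρ₁,ρ₂) be density matrices on ℂ^n and (ρ₁′,ρ₂′) be density matrices on ℂ^m with ρ₁′ ≠ ρ₂′ and supp(ρ₁′) ⊆ supp(ρ₂′), and set M′ := inf{ λ : λρ₂′ − ρ₁′ ≥ 0 }, m′ := sup{ λ : ρ₁′ − λρ₂′ ≥ 0 }, M := inf{ λ : λρ₂ − ρ₁ ≥ 0 } (possibly +∞), m := sup{ λ : ρ₁ − λρ₂ ≥ 0 }. For q > 0, define P_max(q) := max{ Tr[(E+F)ρ₁] : E, F ≥ 0, E+F ≤ 𝟙ₙ, Tr[(E+F)(qρ₂ − ρ₁)] = 0, Tr[E(ρ₁ − qM′ρ₂)] ≥ 0, Tr[F(qm′ρ₂ − ρ₁)] ≥ 0 }. If P_max(q) > 0, then m ≤ q·m′ and q·M′ ≤ M (i.e., m/m′ ≤ q ≤ M/M′). -/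

import Mathlib

open scoped ComplexOrder ENNReal

/-- `sup(A/B) = inf { λ : λB - A ≥ 0 }`, as a value in `ℝ≥0∞` (equal to `+∞` when no
`λ` satisfies `λB - A ≥ 0`). -/
noncomputable def supRatioE {k : ℕ} (A B : Matrix (Fin k) (Fin k) ℂ) : ℝ≥0∞ :=
  sInf { x : ℝ≥0∞ | ∃ lam : ℝ,
    x = ENNReal.ofReal lam ∧ ((lam : ℂ) • B - A).PosSemidef }

/-- `sup(A/B) = inf { λ : λB - A ≥ 0 }`. -/
noncomputable def supRatio {k : ℕ} (A B : Matrix (Fin k) (Fin k) ℂ) : ℝ :=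
  sInf { lam : ℝ | ((lam : ℂ) • B - A).PosSemidef }

/-- `inf(A/B) = sup { λ : A - λB ≥ 0 }`. -/
noncomputable def infRatio {k : ℕ} (A B : Matrix (Fin k) (Fin k) ℂ) : ℝ :=
  sSup { lam : ℝ | (A - (lam : ℂ) • B).PosSemidef }

/-- The optimal success probability `P_max(q)` of a probabilistic test-and-prepare
transformation with fixed ratio `q = p₁/p₂`. -/
noncomputable def Pmax {n : ℕ} (ρ₁ ρ₂ : Matrix (Fin n) (Fin n) ℂ)
    (M' m' q : ℝ) : ℝ :=
  sSup { x : ℝ | ∃ E F : Matrix (Fin n) (Fin n) ℂ,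
    E.PosSemidef ∧ F.PosSemidef ∧
    ((1 : Matrix (Fin n) (Fin n) ℂ) - (E + F)).PosSemidef ∧
    ((E + F) * ((q : ℂ) • ρ₂ - ρ₁)).trace = 0 ∧
    0 ≤ (E * (ρ₁ - ((q * M' : ℝ) : ℂ) • ρ₂)).trace.re ∧
    0 ≤ (F * (((q * m' : ℝ) : ℂ) • ρ₂ - ρ₁)).trace.re ∧
    x = ((E + F) * ρ₁).trace.re }

/-!
Take a feasible pair `(E, F)` with `Tr[(E+F)ρ₁] > 0` and write `a_i = Tr[Eρ_i]`, `b_i = Tr[Fρ_i]`,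
all nonnegative. The constraints read `q(a₂ + b₂) = a₁ + b₁`, `qM'a₂ ≤ a₁` and `b₁ ≤ qm'b₂`.
Because `ρ₁' ≠ ρ₂'` are states with `supp ρ₁' ⊆ supp ρ₂'`, the extremal ratios `M'` and `m'` are
attained, hence `m' < 1 < M'`. If `ρ₁ - λρ₂ ≥ 0` then `λb₂ ≤ b₁ ≤ qm'b₂`, and `b₂ > 0` since
otherwise `b₁ = 0` and `qa₂ = a₁ > 0` contradicts `qM'a₂ ≤ a₁`. Symmetrically, if `λρ₂ - ρ₁ ≥ 0`
then `qM'a₂ ≤ a₁ ≤ λa₂` with `a₂ > 0`.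
-/

namespace Matrix

variable {ι : Type*} [Fintype ι]

lemma PosSemidef.trace_pos_of_ne_zero {A : Matrix ι ι ℂ} (hA : A.PosSemidef) (h : A ≠ 0) :
    0 < A.trace :=
  hA.trace_nonneg.lt_of_ne (Ne.symm (mt hA.trace_eq_zero_iff.mp h))

lemma re_trace_mul_sub_smul (X A B : Matrix ι ι ℂ) (r : ℝ) :
    (X * (A - (r : ℂ) • B)).trace.re = (X * A).trace.re - r * (X * B).trace.re := by
  simp [Matrix.mul_sub, trace_sub]

lemma re_trace_mul_smul_sub (X A B : Matrix ι ι ℂ) (r : ℝ) :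
    (X * ((r : ℂ) • B - A)).trace.re = r * (X * B).trace.re - (X * A).trace.re := by
  simp [Matrix.mul_sub, trace_sub]

lemma sub_smul_ne_zero_of_trace_eq_one {ρ σ : Matrix ι ι ℂ} (hρ : ρ.trace = 1)
    (hσ : σ.trace = 1) (hne : ρ ≠ σ) (r : ℝ) : ρ - (r : ℂ) • σ ≠ 0 := fun h0 => by
  have hρσ : ρ = (r : ℂ) • σ := sub_eq_zero.mp h0
  have hr : (r : ℂ) = 1 := by simpa [hρ, hσ] using (congrArg trace hρσ).symm
  exact hne (by rw [hρσ, hr, one_smul])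

lemma lt_one_of_posSemidef_sub_smul {ρ σ : Matrix ι ι ℂ} (hρ : ρ.trace = 1) (hσ : σ.trace = 1)
    (hne : ρ ≠ σ) {r : ℝ} (h : (ρ - (r : ℂ) • σ).PosSemidef) : r < 1 := by
  have := h.trace_pos_of_ne_zero (sub_smul_ne_zero_of_trace_eq_one hρ hσ hne r)
  simpa [trace_sub, hρ, hσ] using (Complex.lt_def.mp this).1

lemma one_lt_of_posSemidef_smul_sub {ρ σ : Matrix ι ι ℂ} (hρ : ρ.trace = 1) (hσ : σ.trace = 1)
    (hne : ρ ≠ σ) {r : ℝ} (h : ((r : ℂ) • σ - ρ).PosSemidef) : 1 < r := by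
  have := h.trace_pos_of_ne_zero <| by
    rw [← neg_sub]
    exact neg_ne_zero.mpr (sub_smul_ne_zero_of_trace_eq_one hρ hσ hne r)
  simpa [trace_sub, hρ, hσ] using (Complex.lt_def.mp this).1

variable [DecidableEq ι]

lemma isClosed_setOf_posSemidef : IsClosed {A : Matrix ι ι ℂ | A.PosSemidef} := by
  open scoped MatrixOrder Matrix.Norms.L2Operator in
  simpa only [nonneg_iff_posSemidef] using CStarAlgebra.isClosed_nonneg (A := Matrix ι ι ℂ)

lemma PosSemidef.trace_mul_nonneg {A B : Matrix ι ι ℂ} (hA : A.PosSemidef)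
    (hB : B.PosSemidef) : 0 ≤ (A * B).trace := by
  open scoped MatrixOrder Matrix.Norms.L2Operator in
  obtain ⟨C, rfl⟩ := CStarAlgebra.nonneg_iff_eq_star_mul_self.mp hB.nonneg
  rw [← Matrix.mul_assoc, trace_mul_cycle]
  exact (hA.mul_mul_conjTranspose_same C).trace_nonneg

lemma PosSemidef.re_trace_mul_nonneg {A B : Matrix ι ι ℂ} (hA : A.PosSemidef)
    (hB : B.PosSemidef) : 0 ≤ (A * B).trace.re :=
  (Complex.le_def.mp (hA.trace_mul_nonneg hB)).1

lemma mul_re_trace_le_of_posSemidef_sub_smul {X A B : Matrix ι ι ℂ} {r : ℝ}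
    (hX : X.PosSemidef) (h : (A - (r : ℂ) • B).PosSemidef) :
    r * (X * B).trace.re ≤ (X * A).trace.re := by
  have := hX.re_trace_mul_nonneg h
  rw [re_trace_mul_sub_smul] at this
  linarith

lemma re_trace_mul_le_of_posSemidef_smul_sub {X A B : Matrix ι ι ℂ} {r : ℝ}
    (hX : X.PosSemidef) (h : ((r : ℂ) • B - A).PosSemidef) :
    (X * A).trace.re ≤ r * (X * B).trace.re := by
  have := hX.re_trace_mul_nonneg h
  rw [re_trace_mul_smul_sub] at this
  linarith

lemma ker_le_ker_of_range_le {A B : Matrix ι ι ℂ} (hA : A.PosSemidef) (hB : B.IsHermitian)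
    (hrange : LinearMap.range (toLin' A) ≤ LinearMap.range (toLin' B)) (x : ι → ℂ)
    (hx : B *ᵥ x = 0) : A *ᵥ x = 0 := by
  obtain ⟨y, hy⟩ := hrange ⟨x, rfl⟩
  rw [toLin'_apply, toLin'_apply] at hy
  rw [← hA.dotProduct_mulVec_zero_iff, ← hy, dotProduct_mulVec, ← hB.eq, ← star_mulVec, hx,
    star_zero, zero_dotProduct]

lemma IsHermitian.exists_smul_one_sub_posSemidef {A : Matrix ι ι ℂ} (hA : A.IsHermitian) :
    ∃ C : ℝ, 0 ≤ C ∧ ((C : ℂ) • 1 - A).PosSemidef := by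
  open scoped MatrixOrder Matrix.Norms.L2Operator in
  exact ⟨‖A‖, norm_nonneg A, by
    simpa [le_iff, Algebra.algebraMap_eq_smul_one] using hA.isSelfAdjoint.le_algebraMap_norm_self⟩

/-- With `P` the projection onto the support of `μ`, the kernel condition gives `A = PAP`, so
`A ≤ C • 1` yields `A ≤ C • P ≤ c • diagonal μ`. -/
lemma IsHermitian.exists_smul_diagonal_sub {A : Matrix ι ι ℂ} {μ : ι → ℝ} (hA : A.IsHermitian)
    (hμ : ∀ i, 0 ≤ μ i) (hker : ∀ j, μ j = 0 → A *ᵥ Pi.single j 1 = 0) :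
    ∃ c : ℝ, ((c : ℂ) • diagonal (fun i => (μ i : ℂ)) - A).PosSemidef := by
  obtain ⟨C, hC, hCA⟩ := hA.exists_smul_one_sub_posSemidef
  set P : Matrix ι ι ℂ := diagonal fun i => if μ i = 0 then 0 else 1
  have hcol : ∀ i j, μ j = 0 → A i j = 0 := fun i j hj => by
    simpa using congrFun (hker j hj) i
  have hrow : ∀ i j, μ i = 0 → A i j = 0 := fun i j hi => by
    rw [← hA.apply i j, hcol j i hi, star_zero]
  have hPAP : Pᴴ * ((C : ℂ) • 1 - A) * P = (C : ℂ) • P - A := by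
    ext i j
    obtain rfl | hij := eq_or_ne i j
    · by_cases hi : μ i = 0 <;> simp [P, diagonal_mul, mul_diagonal, hi, hcol]
    · by_cases hi : μ i = 0 <;> by_cases hj : μ j = 0 <;>
        simp [P, diagonal_mul, mul_diagonal, hi, hj, hij, hcol, hrow]
  -- `(μ i)⁻¹ = 0` where `μ i = 0`, so this `c` satisfies `C ≤ c * μ i` wherever `μ i ≠ 0`.
  set c := C * ∑ i, (μ i)⁻¹
  have hdiag : ((c : ℂ) • diagonal (fun i => (μ i : ℂ)) - (C : ℂ) • P).PosSemidef := by
    rw [← diagonal_smul, ← diagonal_smul, diagonal_sub, posSemidef_diagonal_iff]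
    intro i
    simp only [Pi.smul_apply, smul_eq_mul]
    split_ifs with hi
    · simp [hi]
    rw [← Complex.ofReal_mul, ← Complex.ofReal_one, ← Complex.ofReal_mul, ← Complex.ofReal_sub,
      Complex.zero_le_real, sub_nonneg]
    have hinv : (μ i)⁻¹ ≤ ∑ j, (μ j)⁻¹ :=
      Finset.single_le_sum (fun j _ => inv_nonneg.mpr (hμ j)) (Finset.mem_univ i)
    calc C * 1 = C * (μ i)⁻¹ * μ i := by field_simp
      _ ≤ c * μ i := mul_le_mul_of_nonneg_right (mul_le_mul_of_nonneg_left hinv hC) (hμ i)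
  refine ⟨c, ?_⟩
  have := hdiag.add (hCA.conjTranspose_mul_mul_same P)
  rwa [hPAP, sub_add_sub_cancel] at this

lemma IsHermitian.exists_smul_sub_of_ker_le {A B : Matrix ι ι ℂ} (hA : A.IsHermitian)
    (hB : B.PosSemidef) (hker : ∀ x, B *ᵥ x = 0 → A *ᵥ x = 0) :
    ∃ c : ℝ, ((c : ℂ) • B - A).PosSemidef := by
  set μ := hB.1.eigenvalues
  set U : Matrix ι ι ℂ := (hB.1.eigenvectorUnitary : Matrix ι ι ℂ)
  have hUU' : U * Uᴴ = 1 := Unitary.mul_star_self_of_mem hB.1.eigenvectorUnitary.2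
  have hBU : B = U * diagonal (fun i => (μ i : ℂ)) * Uᴴ := hB.1.spectral_theorem
  have hμ : ∀ i, 0 ≤ μ i := hB.eigenvalues_nonneg
  have hkerU : ∀ j, μ j = 0 → (Uᴴ * A * U) *ᵥ Pi.single j 1 = 0 := fun j hj => by
    have hBv : B *ᵥ U *ᵥ Pi.single j 1 = 0 := by
      rw [hB.1.eigenvectorUnitary_mulVec, hB.1.mulVec_eigenvectorBasis,
        show hB.1.eigenvalues j = 0 from hj, zero_smul]
    rw [← mulVec_mulVec, ← mulVec_mulVec, hker _ hBv, mulVec_zero]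
  obtain ⟨c, hc⟩ :=
    (isHermitian_conjTranspose_mul_mul U hA).exists_smul_diagonal_sub hμ hkerU
  refine ⟨c, ?_⟩
  convert hc.mul_mul_conjTranspose_same U using 1
  conv_lhs => rw [hBU]
  simp only [Matrix.mul_sub, Matrix.sub_mul, Matrix.mul_smul, Matrix.smul_mul,
    ← Matrix.mul_assoc, hUU', Matrix.one_mul]
  simp only [Matrix.mul_assoc, hUU', Matrix.mul_one]

end Matrix

open Matrix

section Ratios

variable {k : ℕ} {ρ σ : Matrix (Fin k) (Fin k) ℂ}

lemma infRatio_lt_one (hρ : ρ.PosSemidef) (hρt : ρ.trace = 1) (hσt : σ.trace = 1)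
    (hne : ρ ≠ σ) : infRatio ρ σ < 1 := by
  have hclosed : IsClosed {r : ℝ | (ρ - (r : ℂ) • σ).PosSemidef} :=
    isClosed_setOf_posSemidef.preimage (by fun_prop)
  exact lt_one_of_posSemidef_sub_smul hρt hσt hne <| hclosed.csSup_mem ⟨0, by simpa using hρ⟩
    ⟨1, fun _ hr => (lt_one_of_posSemidef_sub_smul hρt hσt hne hr).le⟩

lemma one_lt_supRatio (hρ : ρ.PosSemidef) (hσ : σ.PosSemidef) (hρt : ρ.trace = 1)
    (hσt : σ.trace = 1) (hne : ρ ≠ σ)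
    (hsupp : LinearMap.range (toLin' ρ) ≤ LinearMap.range (toLin' σ)) : 1 < supRatio ρ σ := by
  have hclosed : IsClosed {r : ℝ | ((r : ℂ) • σ - ρ).PosSemidef} :=
    isClosed_setOf_posSemidef.preimage (by fun_prop)
  obtain ⟨c, hc⟩ := hρ.1.exists_smul_sub_of_ker_le hσ (ker_le_ker_of_range_le hρ hσ.1 hsupp)
  exact one_lt_of_posSemidef_smul_sub hρt hσt hne <| hclosed.csInf_mem ⟨c, hc⟩
    ⟨1, fun _ hr => (one_lt_of_posSemidef_smul_sub hρt hσt hne hr).le⟩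

end Ratios

section TestConstraints

variable {q M' m' a₁ a₂ b₁ b₂ r : ℝ}

lemma le_mul_of_test_constraints (hM' : 1 < M') (hb₁ : 0 ≤ b₁) (hb₂ : 0 ≤ b₂)
    (hx : 0 < a₁ + b₁) (hbal : q * (a₂ + b₂) = a₁ + b₁) (hE : q * M' * a₂ ≤ a₁)
    (hF : b₁ ≤ q * m' * b₂) (hr : r * b₂ ≤ b₁) : r ≤ q * m' := by
  have hb₂ : 0 < b₂ := by
    refine hb₂.lt_of_ne' fun h0 => ?_
    subst h0
    have hqa₂ : 0 < q * a₂ := by linarith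
    nlinarith [mul_pos hqa₂ (sub_pos.mpr hM')]
  exact le_of_mul_le_mul_right (hr.trans hF) hb₂

lemma mul_le_of_test_constraints (hm' : m' < 1) (ha₂ : 0 ≤ a₂)
    (hx : 0 < a₁ + b₁) (hbal : q * (a₂ + b₂) = a₁ + b₁)
    (hE : q * M' * a₂ ≤ a₁) (hF : b₁ ≤ q * m' * b₂) (hr : a₁ ≤ r * a₂) : q * M' ≤ r := by
  have ha₂ : 0 < a₂ := by
    refine ha₂.lt_of_ne' fun h0 => ?_
    subst h0
    have hqb₂ : 0 < q * b₂ := by linarith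
    nlinarith [mul_pos hqb₂ (sub_pos.mpr hm')]
  exact le_of_mul_le_mul_right (hE.trans hr) ha₂

end TestConstraints

theorem Pmax_pos_implies_q_range_general
    {n m : ℕ} (ρ₁ ρ₂ : Matrix (Fin n) (Fin n) ℂ) (ρ₁' ρ₂' : Matrix (Fin m) (Fin m) ℂ)
    (hρ₁ : ρ₁.PosSemidef)
    (hρ₂ : ρ₂.PosSemidef)
    (hρ₁' : ρ₁'.PosSemidef) (hρ₁'tr : ρ₁'.trace = 1)
    (hρ₂' : ρ₂'.PosSemidef) (hρ₂'tr : ρ₂'.trace = 1)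
    (hne' : ρ₁' ≠ ρ₂')
    (hsupp' : LinearMap.range (Matrix.toLin' ρ₁') ≤ LinearMap.range (Matrix.toLin' ρ₂'))
    (M' m' : ℝ) (hM' : M' = supRatio ρ₁' ρ₂') (hm' : m' = infRatio ρ₁' ρ₂')
    (q : ℝ)
    (hpos : 0 < Pmax ρ₁ ρ₂ M' m' q) :
    infRatio ρ₁ ρ₂ ≤ q * m' ∧ ENNReal.ofReal (q * M') ≤ supRatioE ρ₁ ρ₂ := by
  obtain ⟨_, ⟨E, F, hE, hF, -, hbal, hEM, hFm, rfl⟩, hx⟩ :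
      ∃ x ∈ {x : ℝ | _}, 0 < x := by
    by_contra! h
    exact hpos.not_ge (Real.sSup_nonpos h)
  have hM'1 : 1 < M' := hM' ▸ one_lt_supRatio hρ₁' hρ₂' hρ₁'tr hρ₂'tr hne' hsupp'
  have hm'1 : m' < 1 := hm' ▸ infRatio_lt_one hρ₁' hρ₁'tr hρ₂'tr hne'
  replace hbal := congrArg Complex.re hbal
  rw [re_trace_mul_smul_sub, Complex.zero_re, sub_eq_zero] at hbal
  simp only [Matrix.add_mul, trace_add, Complex.add_re] at hbal hx
  rw [re_trace_mul_sub_smul, sub_nonneg] at hEM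
  rw [re_trace_mul_smul_sub, sub_nonneg] at hFm
  constructor
  · refine csSup_le ⟨0, by simpa using hρ₁⟩ fun r hr => ?_
    exact le_mul_of_test_constraints hM'1 (hF.re_trace_mul_nonneg hρ₁)
      (hF.re_trace_mul_nonneg hρ₂) hx hbal hEM hFm (mul_re_trace_le_of_posSemidef_sub_smul hF hr)
  · refine le_sInf ?_
    rintro _ ⟨r, rfl, hr⟩
    exact ENNReal.ofReal_le_ofReal <| mul_le_of_test_constraints hm'1
      (hE.re_trace_mul_nonneg hρ₂) hx hbal hEM hFm (re_trace_mul_le_of_posSemidef_smul_sub hE hr)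

/-- Lemma 9 of the paper: if the optimal success probability `P_max(q)` is positive,
then `m ≤ q·m'` and `q·M' ≤ M` (i.e. `m/m' ≤ q ≤ M/M'`), where `M = sup(ρ₁/ρ₂)` may
be `+∞`. -/
theorem Pmax_pos_implies_q_range
    {n m : ℕ} (ρ₁ ρ₂ : Matrix (Fin n) (Fin n) ℂ) (ρ₁' ρ₂' : Matrix (Fin m) (Fin m) ℂ)
    (hρ₁ : ρ₁.PosSemidef) (hρ₁tr : ρ₁.trace = 1)
    (hρ₂ : ρ₂.PosSemidef) (hρ₂tr : ρ₂.trace = 1)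
    (hρ₁' : ρ₁'.PosSemidef) (hρ₁'tr : ρ₁'.trace = 1)
    (hρ₂' : ρ₂'.PosSemidef) (hρ₂'tr : ρ₂'.trace = 1)
    (hne' : ρ₁' ≠ ρ₂')
    (hsupp' : LinearMap.range (Matrix.toLin' ρ₁') ≤ LinearMap.range (Matrix.toLin' ρ₂'))
    (M' m' : ℝ) (hM' : M' = supRatio ρ₁' ρ₂') (hm' : m' = infRatio ρ₁' ρ₂')
    (q : ℝ) (hq : 0 < q)
    (hpos : 0 < Pmax ρ₁ ρ₂ M' m' q) :
    infRatio ρ₁ ρ₂ ≤ q * m' ∧ ENNReal.ofReal (q * M') ≤ supRatioE ρ₁ ρ₂ :=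
  Pmax_pos_implies_q_range_general ρ₁ ρ₂ ρ₁' ρ₂' hρ₁ hρ₂ hρ₁' hρ₁'tr hρ₂' hρ₂'tr hne' hsupp' M' m'
    hM' hm' q hpos
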